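/- arXiv:1303.6646 — 2 statements merged into one kernel-verified Lean document; each statement's English description precedes it below -/
import Mathlib

section
/- Let V be a finite-dimensional real topological vector space, and let C ⊆ V be a finitely generated convex cone that is salient and has nonempty topological interior. Let T : V → V be a linear automorphism (linear equivalence) with T(C) = C. Suppose there exist u in the interior of C and λ ∈ ℝ with T(u) = λ·u. Then there exists an integer m ≥ 1 such that T^m = λ^m · id, i.e. T^m(v) = λ^m · v for all v ∈ V. -/
open Set Finset Pointwise

section Aux

variable {E : Type*} [NormedAddCommGroup E] [NormedSpace ℝ E] [FiniteDimensional ℝ E]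

set_option maxHeartbeats 1000000 in
theorem aux_cone (r : ℕ) (v : Fin r → E) (C : Set E)
    (hC : C = {x | ∃ c : Fin r → ℝ, (∀ i, 0 ≤ c i) ∧ x = ∑ i, c i • v i})
    (hsalient : ∀ x ∈ C, -x ∈ C → x = 0)
    (T : E ≃ₗ[ℝ] E) (hT : T '' C = C)
    (u : E) (hu : u ∈ interior C) (l : ℝ) (hl : T u = l • u) :
    ∃ m : ℕ, 1 ≤ m ∧ ∀ w : E, (T ^ m) w = l ^ m • w := by
  classical
  -- basic cone facts
  have h0C : (0 : E) ∈ C := by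
    rw [hC]; exact ⟨fun _ => 0, fun i => le_refl 0, by simp⟩
  have hvC : ∀ i, v i ∈ C := by
    intro i
    rw [hC]
    refine ⟨Pi.single i 1, ?_, ?_⟩
    · intro j
      by_cases h : j = i <;> simp [Pi.single_apply, h]
    · simp [Pi.single_apply, ite_smul]
  have hsmulC : ∀ t : ℝ, 0 ≤ t → ∀ x ∈ C, t • x ∈ C := by
    intro t ht x hx
    rw [hC] at hx ⊢
    obtain ⟨c, hc, rfl⟩ := hx
    refine ⟨fun i => t * c i, fun i => mul_nonneg ht (hc i), ?_⟩
    rw [Finset.smul_sum]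
    simp [smul_smul]
  have haddC : ∀ x ∈ C, ∀ y ∈ C, x + y ∈ C := by
    intro x hx y hy
    rw [hC] at hx hy ⊢
    obtain ⟨c, hc, rfl⟩ := hx
    obtain ⟨d, hd, rfl⟩ := hy
    refine ⟨fun i => c i + d i, fun i => add_nonneg (hc i) (hd i), ?_⟩
    rw [← Finset.sum_add_distrib]
    simp [add_smul]
  have hsumC : ∀ {ι : Type} (s : Finset ι) (g : ι → E),
      (∀ i ∈ s, g i ∈ C) → ∑ i ∈ s, g i ∈ C := by
    intro ι s g hg
    exact Finset.sum_induction g (· ∈ C) (fun a b ha hb => haddC a ha b hb) h0C hg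
  have hconv : Convex ℝ C := by
    intro x hx y hy a b ha hb hab
    exact haddC _ (hsmulC a ha x hx) _ (hsmulC b hb y hy)
  -- trivial case u = 0
  by_cases hu0 : u = 0
  · refine ⟨1, le_refl 1, fun w => ?_⟩
    rw [hu0] at hu
    have hw : w = 0 := by
      obtain ⟨ε, hε, hball⟩ := Metric.isOpen_iff.1 isOpen_interior 0 hu
      by_contra hw0
      have hwn : 0 < ‖w‖ := norm_pos_iff.2 hw0
      set t : ℝ := ε / (2 * ‖w‖) with ht
      have htpos : 0 < t := by positivity
      have hnorm : ‖t • w‖ < ε := by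
        rw [norm_smul, Real.norm_eq_abs, abs_of_pos htpos, ht]
        rw [div_mul_eq_mul_div, div_lt_iff₀ (by positivity : (0:ℝ) < 2 * ‖w‖)]
        nlinarith
      have hmem : t • w ∈ Metric.ball (0 : E) ε := by
        rwa [mem_ball_zero_iff]
      have hmem' : -(t • w) ∈ Metric.ball (0 : E) ε := by
        rwa [mem_ball_zero_iff, norm_neg]
      have h1 : t • w ∈ C := interior_subset (hball hmem)
      have h2 : -(t • w) ∈ C := interior_subset (hball hmem')
      have := hsalient _ h1 h2
      rw [smul_eq_zero] at this
      rcases this with h' | h'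
      · exact htpos.ne' h'
      · exact hw0 h'
    simp [hw]
  -- T maps C to C and back
  have hTC : ∀ x ∈ C, T x ∈ C := fun x hx => hT ▸ Set.mem_image_of_mem _ hx
  have hTsymmC : ∀ x ∈ C, T.symm x ∈ C := by
    intro x hx
    rw [← hT] at hx
    obtain ⟨y, hy, hyx⟩ := hx
    have : T.symm x = y := by rw [← hyx]; simp
    rwa [this]
  have huC : u ∈ C := interior_subset hu
  -- positivity of l
  have hlpos : 0 < l := by
    rcases lt_trichotomy l 0 with h | h | h
    · exfalso
      have h1 : l • u ∈ C := hl ▸ hTC u huC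
      have h2 : -(l • u) ∈ C := by
        rw [← neg_smul]
        exact hsmulC (-l) (by linarith) u huC
      have := hsalient _ h1 h2
      rw [smul_eq_zero] at this
      rcases this with h' | h'
      · exact absurd h' (ne_of_lt h)
      · exact hu0 h'
    · exfalso
      apply hu0
      have : T u = 0 := by rw [hl, h, zero_smul]
      exact T.injective (by simpa using this)
    · exact h
  -- strictly positive functional on C \ {0}
  obtain ⟨f, hfpos⟩ : ∃ f : E →L[ℝ] ℝ, ∀ x ∈ C, x ≠ 0 → 0 < f x := by
    set VS : Set E := Set.range v \ {0} with hVS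
    have hVSfin : VS.Finite := (Set.finite_range v).diff
    have h0K : (0 : E) ∉ convexHull ℝ VS := by
      intro h0
      rw [mem_convexHull_iff_exists_fintype] at h0
      obtain ⟨ι, _, w, z, hw0, hw1, hz, hsum⟩ := h0
      obtain ⟨i0, hi0⟩ : ∃ i, w i ≠ 0 := by
        by_contra h
        push_neg at h
        rw [Finset.sum_eq_zero (fun i _ => h i)] at hw1
        norm_num at hw1
      have hzC : ∀ i, z i ∈ C := by
        intro i
        obtain ⟨⟨j, hj⟩, -⟩ := hz i
        exact hj ▸ hvC j
      have h1 : w i0 • z i0 ∈ C := hsmulC _ (hw0 i0) _ (hzC i0)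
      have h2 : -(w i0 • z i0) ∈ C := by
        have hsplit : w i0 • z i0 + ∑ i ∈ Finset.univ.erase i0, w i • z i = 0 :=
          (Finset.add_sum_erase Finset.univ (fun i => w i • z i)
            (Finset.mem_univ i0)).trans hsum
        rw [← eq_neg_of_add_eq_zero_right hsplit]
        exact hsumC _ _ (fun i _ => hsmulC _ (hw0 i) _ (hzC i))
      have := hsalient _ h1 h2
      rw [smul_eq_zero] at this
      rcases this with h' | h'
      · exact hi0 h'
      · exact (hz i0).2 h'
    obtain ⟨f, c, hc0, hcb⟩ :=
      geometric_hahn_banach_point_closed (convex_convexHull ℝ VS)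
        (hVSfin.isClosed_convexHull (𝕜 := ℝ)) h0K
    have hcpos : 0 < c := by simpa using hc0
    refine ⟨f, ?_⟩
    intro x hx hx0
    rw [hC] at hx
    obtain ⟨cc, hcc, rfl⟩ := hx
    obtain ⟨i0, -, hi0⟩ := Finset.exists_ne_zero_of_sum_ne_zero hx0
    have hvne : v i0 ≠ 0 := by intro h; apply hi0; simp [h]
    have hcne : cc i0 ≠ 0 := by intro h; apply hi0; simp [h]
    have hfv : ∀ i, v i ≠ 0 → 0 < f (v i) := fun i hvi =>
      lt_trans hcpos (hcb _ (subset_convexHull ℝ VS ⟨Set.mem_range_self i, hvi⟩))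
    rw [map_sum]
    refine Finset.sum_pos' (fun i _ => ?_) ⟨i0, Finset.mem_univ i0, ?_⟩
    · by_cases hvi : v i = 0
      · simp [hvi]
      · rw [map_smul, smul_eq_mul]
        exact mul_nonneg (hcc i) (hfv i hvi).le
    · rw [map_smul, smul_eq_mul]
      exact mul_pos (lt_of_le_of_ne (hcc i0) (Ne.symm hcne)) (hfv i0 hvne)
  -- iterates
  have hpow_apply' : ∀ (k : ℕ) (x : E), (T ^ (k+1)) x = T ((T ^ k) x) := by
    intro k x
    rw [pow_succ']
    rfl
  have hTpowC : ∀ k : ℕ, ∀ x ∈ C, (T ^ k) x ∈ C := by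
    intro k
    induction k with
    | zero => intro x hx; simpa using hx
    | succ n ih => intro x hx; rw [hpow_apply']; exact hTC _ (ih x hx)
  have hTpow_ne : ∀ (k : ℕ) (x : E), x ≠ 0 → (T ^ k) x ≠ 0 := by
    intro k x hx h
    exact hx ((T ^ k).injective (by simpa using h))
  have hfT : ∀ (k : ℕ) (x : E), x ∈ C → x ≠ 0 → 0 < f ((T ^ k) x) :=
    fun k x hx hx0 => hfpos _ (hTpowC k x hx) (hTpow_ne k x hx0)
  have hfu : 0 < f u := hfpos u huC hu0
  -- the slice B and vertex set W
  set B : Set E := {x | x ∈ C ∧ f x = 1} with hBdef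
  have hBC : ∀ x ∈ B, x ∈ C ∧ x ≠ 0 := by
    rintro x ⟨hxC, hxf⟩
    refine ⟨hxC, ?_⟩
    rintro rfl
    simp at hxf
  set W : Set E := (fun i => (f (v i))⁻¹ • v i) '' {i : Fin r | v i ≠ 0} with hWdef
  have hWfin : W.Finite := (Set.toFinite _).image _
  have hWB : W ⊆ B := by
    rintro x ⟨i, hi, rfl⟩
    have hfvi : 0 < f (v i) := hfpos _ (hvC i) hi
    constructor
    · exact hsmulC _ (inv_nonneg.2 hfvi.le) _ (hvC i)
    · rw [map_smul, smul_eq_mul, inv_mul_cancel₀ hfvi.ne']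
  have hBconv : Convex ℝ B := by
    rintro x ⟨hx1, hx2⟩ y ⟨hy1, hy2⟩ a b ha hb hab
    refine ⟨hconv hx1 hy1 ha hb hab, ?_⟩
    rw [map_add, map_smul, map_smul, smul_eq_mul, smul_eq_mul, hx2, hy2]
    simpa using hab
  have hBW : B = convexHull ℝ W := by
    apply Set.Subset.antisymm
    · rintro x ⟨hxC, hxf⟩
      rw [hC] at hxC
      obtain ⟨c, hc, rfl⟩ := hxC
      set t : Finset (Fin r) := Finset.univ.filter (fun i => v i ≠ 0) with htdef
      have hvnet : ∀ i ∈ t, v i ≠ 0 := by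
        intro i hi
        rw [htdef, Finset.mem_filter] at hi
        exact hi.2
      have hd : ∀ i ∈ t, 0 ≤ c i * f (v i) := fun i hi =>
        mul_nonneg (hc i) (hfpos _ (hvC i) (hvnet i hi)).le
      have hsum1 : ∑ i ∈ t, c i * f (v i) = 1 := by
        rw [← hxf, map_sum, htdef, Finset.sum_filter]
        apply Finset.sum_congr rfl
        intro i _
        by_cases hvi : v i = 0
        · simp [hvi]
        · simp [hvi, map_smul]
      have hrepr : Finset.centerMass t (fun i => c i * f (v i))
          (fun i => (f (v i))⁻¹ • v i) = ∑ i, c i • v i := by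
        rw [Finset.centerMass_eq_of_sum_1 _ _ hsum1]
        have e1 : ∀ i ∈ t, (c i * f (v i)) • ((f (v i))⁻¹ • v i) = c i • v i := by
          intro i hi
          have hne : f (v i) ≠ 0 := (hfpos _ (hvC i) (hvnet i hi)).ne'
          rw [smul_smul, mul_assoc, mul_inv_cancel₀ hne, mul_one]
        rw [Finset.sum_congr rfl e1]
        apply Finset.sum_subset (Finset.subset_univ t)
        intro i _ hit
        have : v i = 0 := by
          by_contra h
          exact hit (by rw [htdef]; exact Finset.mem_filter.2 ⟨Finset.mem_univ i, h⟩)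
        simp [this]
      rw [← hrepr]
      refine Finset.centerMass_mem_convexHull t hd (by rw [hsum1]; norm_num) ?_
      intro i hi
      exact ⟨i, hvnet i hi, rfl⟩
    · rw [← convexHull_eq_self.2 hBconv]
      exact convexHull_mono hWB
  have hBcompact : IsCompact B := by rw [hBW]; exact hWfin.isCompact_convexHull (𝕜 := ℝ)
  set Ext : Set E := B.extremePoints ℝ with hExtdef
  have hExtW : Ext ⊆ W := by
    rw [hExtdef, hBW]
    exact extremePoints_convexHull_subset
  have hExtfin : Ext.Finite := hWfin.subset hExtW
  have hExtB : Ext ⊆ B := extremePoints_subset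
  have hKM : convexHull ℝ Ext = B := by
    have h1 := closure_convexHull_extremePoints hBcompact hBconv
    rwa [IsClosed.closure_eq (hExtfin.isClosed_convexHull (𝕜 := ℝ))] at h1
  -- normalized maps
  obtain ⟨g, hgdef⟩ : ∃ g : E → E, ∀ x, g x = (f (T x))⁻¹ • T x := ⟨_, fun _ => rfl⟩
  obtain ⟨g', hg'def⟩ : ∃ g' : E → E, ∀ x, g' x = (f (T.symm x))⁻¹ • T.symm x :=
    ⟨_, fun _ => rfl⟩
  have hTne : ∀ x : E, x ≠ 0 → T x ≠ 0 := fun x hx h => hx (T.injective (by simpa using h))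
  have hTsne : ∀ x : E, x ≠ 0 → T.symm x ≠ 0 :=
    fun x hx h => hx (T.symm.injective (by simpa using h))
  have hgB : ∀ x ∈ B, g x ∈ B := by
    intro x hx
    obtain ⟨hxC, hx0⟩ := hBC x hx
    have h3 : 0 < f (T x) := hfpos _ (hTC x hxC) (hTne x hx0)
    rw [hgdef]
    exact ⟨hsmulC _ (inv_nonneg.2 h3.le) _ (hTC x hxC),
      by rw [map_smul, smul_eq_mul, inv_mul_cancel₀ h3.ne']⟩
  have hg'B : ∀ x ∈ B, g' x ∈ B := by
    intro x hx
    obtain ⟨hxC, hx0⟩ := hBC x hx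
    have h3 : 0 < f (T.symm x) := hfpos _ (hTsymmC x hxC) (hTsne x hx0)
    rw [hg'def]
    exact ⟨hsmulC _ (inv_nonneg.2 h3.le) _ (hTsymmC x hxC),
      by rw [map_smul, smul_eq_mul, inv_mul_cancel₀ h3.ne']⟩
  have hg'g : ∀ x ∈ B, g' (g x) = x := by
    intro x hx
    obtain ⟨hxC, hx0⟩ := hBC x hx
    have h3 : 0 < f (T x) := hfpos _ (hTC x hxC) (hTne x hx0)
    have hfx : f x = 1 := hx.2
    have e1 : T.symm (g x) = (f (T x))⁻¹ • x := by
      rw [hgdef]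
      simp only [map_smul, LinearEquiv.symm_apply_apply]
    have e2 : f (T.symm (g x)) = (f (T x))⁻¹ := by
      rw [e1, map_smul, smul_eq_mul, hfx, mul_one]
    rw [hg'def, e2, e1, inv_inv, smul_smul, mul_inv_cancel₀ h3.ne', one_smul]
  have hgg' : ∀ x ∈ B, g (g' x) = x := by
    intro x hx
    obtain ⟨hxC, hx0⟩ := hBC x hx
    have h3 : 0 < f (T.symm x) := hfpos _ (hTsymmC x hxC) (hTsne x hx0)
    have hfx : f x = 1 := hx.2
    have e1 : T (g' x) = (f (T.symm x))⁻¹ • x := by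
      rw [hg'def]
      simp only [map_smul, LinearEquiv.apply_symm_apply]
    have e2 : f (T (g' x)) = (f (T.symm x))⁻¹ := by
      rw [e1, map_smul, smul_eq_mul, hfx, mul_one]
    rw [hgdef, e2, e1, inv_inv, smul_smul, mul_inv_cancel₀ h3.ne', one_smul]
  -- g preserves extreme points
  have hgExt : ∀ x ∈ Ext, g x ∈ Ext := by
    intro x hx
    obtain ⟨hxB, hxext⟩ := hx
    refine ⟨hgB x hxB, ?_⟩
    rintro y hy z hz ⟨a, b, ha, hb, hab, habeq⟩
    obtain ⟨hyC, hy0⟩ := hBC y hy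
    obtain ⟨hzC, hz0⟩ := hBC z hz
    have hα : 0 < f (T.symm y) := hfpos _ (hTsymmC y hyC) (hTsne y hy0)
    have hβ : 0 < f (T.symm z) := hfpos _ (hTsymmC z hzC) (hTsne z hz0)
    have hs : 0 < a * f (T.symm y) + b * f (T.symm z) := by positivity
    have hy'' : g' y = (f (T.symm y))⁻¹ • T.symm y := hg'def y
    have hz'' : g' z = (f (T.symm z))⁻¹ • T.symm z := hg'def z
    have e1 : T.symm (g x) = a • T.symm y + b • T.symm z := by
      rw [← habeq, map_add, map_smul, map_smul]
    have e3 : f (T.symm (g x)) = a * f (T.symm y) + b * f (T.symm z) := by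
      rw [e1, map_add, map_smul, map_smul, smul_eq_mul, smul_eq_mul]
    have e4 : x = (f (T.symm (g x)))⁻¹ • T.symm (g x) := by
      rw [← hg'def]
      exact (hg'g x hxB).symm
    have hgx : x ∈ openSegment ℝ (g' y) (g' z) := by
      refine ⟨a * f (T.symm y) / (a * f (T.symm y) + b * f (T.symm z)),
        b * f (T.symm z) / (a * f (T.symm y) + b * f (T.symm z)),
        by positivity, by positivity, by rw [← add_div, div_self hs.ne'], ?_⟩
      rw [hy'', hz'', e4, e3, e1]
      match_scalars
      · field_simp
      · field_simp
    have h1 := hxext (hg'B y hy) (hg'B z hz) hgx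
    rw [← hgg' y hy, h1]
  -- finiteness: some iterate of g fixes Ext pointwise
  haveI : Fintype Ext := hExtfin.fintype
  set gE : Ext → Ext := fun x => ⟨g x, hgExt x x.2⟩ with hgEdef
  have hgEinj : Function.Injective gE := by
    rintro ⟨x, hx⟩ ⟨y, hy⟩ hxy
    have hgxy : g x = g y := congrArg Subtype.val hxy
    have ex : x = y := by
      rw [← hg'g x (hExtB hx), ← hg'g y (hExtB hy), hgxy]
    exact Subtype.ext ex
  have hgEbij := Finite.injective_iff_bijective.1 hgEinj
  set P : Equiv.Perm Ext := Equiv.ofBijective gE hgEbij with hPdef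
  set M : ℕ := orderOf P with hMdef
  have hM1 : 1 ≤ M := orderOf_pos P
  have hPit : ∀ (k : ℕ) (x : Ext), ((P ^ k) x : E) = g^[k] (x : E) := by
    intro k
    induction k with
    | zero => intro x; simp
    | succ n ih =>
      intro x
      rw [Function.iterate_succ_apply, pow_succ]
      rw [Equiv.Perm.mul_apply]
      rw [ih (P x)]
      rfl
  have hfix : ∀ x ∈ Ext, g^[M] x = x := by
    intro x hx
    have h1 : P ^ M = 1 := pow_orderOf_eq_one P
    have h2 := hPit M ⟨x, hx⟩
    rw [h1] at h2
    simpa using h2.symm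
  -- iterate formula for g
  have hgk : ∀ (k : ℕ), ∀ x ∈ B, g^[k] x = (f ((T ^ k) x))⁻¹ • ((T ^ k) x) := by
    intro k
    induction k with
    | zero =>
      intro x hx
      simp [hx.2]
    | succ n ih =>
      intro x hx
      obtain ⟨hxC, hx0⟩ := hBC x hx
      have hs : 0 < f ((T ^ n) x) := hfT n x hxC hx0
      have ht : 0 < f ((T ^ (n+1)) x) := hfT (n+1) x hxC hx0
      rw [Function.iterate_succ_apply', ih x hx]
      have e0 : T ((T ^ n) x) = (T ^ (n+1)) x := (hpow_apply' n x).symm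
      rw [hgdef, map_smul, e0, map_smul, smul_eq_mul, smul_smul]
      congr 1
      field_simp
  -- eigenvalues on extreme points
  obtain ⟨μ, hμdef⟩ : ∃ μ : E → ℝ, ∀ w, μ w = f ((T ^ M) w) := ⟨_, fun _ => rfl⟩
  have hmu : ∀ w ∈ Ext, (T ^ M) w = μ w • w ∧ 0 < μ w := by
    intro w hw
    have hwB := hExtB hw
    obtain ⟨hwC, hw0⟩ := hBC w hwB
    have hμpos : 0 < μ w := by rw [hμdef]; exact hfT M w hwC hw0
    refine ⟨?_, hμpos⟩
    have h1 : g^[M] w = w := hfix w hw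
    rw [hgk M w hwB, ← hμdef] at h1
    calc (T ^ M) w = μ w • ((μ w)⁻¹ • (T ^ M) w) := by
          rw [smul_smul, mul_inv_cancel₀ hμpos.ne', one_smul]
    _ = μ w • w := by rw [show ((μ w)⁻¹ • (T ^ M) w) = w from h1]
  have hmuit : ∀ w ∈ Ext, ∀ k : ℕ, ((T ^ M) ^ k) w = (μ w) ^ k • w := by
    intro w hw k
    induction k with
    | zero => simp
    | succ n ih =>
      have e : ((T ^ M) ^ (n+1)) w = (T ^ M) (((T ^ M) ^ n) w) := by rw [pow_succ']; rfl
      rw [e, ih, map_smul, (hmu w hw).1, smul_smul, ← pow_succ]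
  -- the interior eigenvector, normalized
  obtain ⟨u₀, hu₀def⟩ : ∃ w : E, w = (f u)⁻¹ • u := ⟨_, rfl⟩
  have hfu₀ : f u₀ = 1 := by
    rw [hu₀def, map_smul, smul_eq_mul, inv_mul_cancel₀ hfu.ne']
  have hu₀B : u₀ ∈ B :=
    ⟨hu₀def ▸ hsmulC _ (inv_nonneg.2 hfu.le) _ huC, hfu₀⟩
  have hu₀int : u₀ ∈ interior C := by
    rw [hu₀def, mem_interior]
    refine ⟨(f u)⁻¹ • interior C, ?_, ?_, ?_⟩
    · rintro y ⟨x, hx, rfl⟩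
      exact hsmulC _ (inv_nonneg.2 hfu.le) _ (interior_subset hx)
    · exact isOpen_interior.smul₀ (inv_ne_zero hfu.ne')
    · exact ⟨u, hu, rfl⟩
  have hTu : ∀ k : ℕ, (T ^ k) u = l ^ k • u := by
    intro k
    induction k with
    | zero => simp
    | succ n ih => rw [hpow_apply', ih, map_smul, hl, smul_smul, ← pow_succ]
  have hTu₀ : ∀ k : ℕ, (T ^ k) u₀ = l ^ k • u₀ := by
    intro k
    rw [hu₀def, map_smul, hTu k, smul_smul, smul_smul, mul_comm]
  -- Ext is nonempty
  have hExtne : Ext.Nonempty := by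
    by_contra h
    rw [Set.not_nonempty_iff_eq_empty] at h
    rw [h, convexHull_empty] at hKM
    rw [← hKM] at hu₀B
    exact hu₀B
  set s : Finset E := hExtfin.toFinset with hsdef
  have hmem_s : ∀ y, y ∈ s ↔ y ∈ Ext := fun y => Set.Finite.mem_toFinset _
  have hExt_coe : (s : Set E) = Ext := Set.Finite.coe_toFinset _
  have hsne : s.Nonempty := by
    obtain ⟨y, hy⟩ := hExtne
    exact ⟨y, (hmem_s y).2 hy⟩
  have hscard : 0 < (s.card : ℝ) := by exact_mod_cast Finset.card_pos.2 hsne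
  have hfy1 : ∀ y ∈ s, f y = 1 := fun y hy => (hExtB ((hmem_s y).1 hy)).2
  obtain ⟨bbar, hbbardef⟩ : ∃ w : E, w = (s.card : ℝ)⁻¹ • ∑ y ∈ s, y := ⟨_, rfl⟩
  have hbbarB : bbar ∈ B := by
    rw [← hKM, ← hExt_coe]
    have h := s.centerMass_mem_convexHull (w := fun _ => (1:ℝ)) (z := id)
      (fun y _ => zero_le_one) (by simpa using hscard) (fun y hy => Finset.mem_coe.2 hy)
    have e : s.centerMass (fun _ => (1:ℝ)) id = bbar := by
      rw [hbbardef]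
      simp [Finset.centerMass]
    rwa [e] at h
  -- find a representation of u₀ with all coefficients positive
  set φ : ℝ → E := fun ε => (1 - ε)⁻¹ • (u₀ - ε • bbar) with hφdef
  have hφcont : ContinuousAt φ 0 := by
    apply ContinuousAt.smul
    · exact ((continuous_const.sub continuous_id).continuousAt).inv₀ (by norm_num)
    · exact (continuous_const.sub (continuous_id.smul continuous_const)).continuousAt
  have hφ0 : φ 0 = u₀ := by simp [hφdef]
  have hnhds : φ ⁻¹' (interior C) ∈ nhds (0:ℝ) :=
    hφcont.preimage_mem_nhds (isOpen_interior.mem_nhds (hφ0 ▸ hu₀int))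
  obtain ⟨δ, hδ, hδsub⟩ := Metric.mem_nhds_iff.1 hnhds
  set ε : ℝ := min (δ/2) (1/2) with hεdef
  have hε0 : 0 < ε := lt_min (by linarith) (by norm_num)
  have hε1 : ε < 1 := lt_of_le_of_lt (min_le_right _ _) (by norm_num)
  have h1ε : (0:ℝ) < 1 - ε := by linarith
  have hεδ : ε ∈ Metric.ball (0:ℝ) δ := by
    rw [Metric.mem_ball, Real.dist_eq, sub_zero, abs_of_pos hε0]
    exact lt_of_le_of_lt (min_le_left _ _) (by linarith)
  have hzint : φ ε ∈ interior C := hδsub hεδ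
  obtain ⟨z, hzdef⟩ : ∃ z : E, z = φ ε := ⟨_, rfl⟩
  rw [← hzdef] at hzint
  have hzC : z ∈ C := interior_subset hzint
  have hfz : f z = 1 := by
    rw [hzdef]
    show f ((1 - ε)⁻¹ • (u₀ - ε • bbar)) = 1
    rw [map_smul, map_sub, map_smul, hfu₀, smul_eq_mul, smul_eq_mul, hbbarB.2]
    field_simp
  have hzB : z ∈ B := ⟨hzC, hfz⟩
  have hzrep : ∃ wz : E → ℝ, (∀ y ∈ s, 0 ≤ wz y) ∧ ∑ y ∈ s, wz y = 1 ∧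
      ∑ y ∈ s, wz y • y = z := by
    have hmem : z ∈ convexHull ℝ (↑s : Set E) := by
      rw [hExt_coe, hKM]; exact hzB
    rw [Finset.convexHull_eq] at hmem
    obtain ⟨wz, h1, h2, h3⟩ := hmem
    refine ⟨wz, h1, h2, ?_⟩
    rw [← h3, Finset.centerMass_eq_of_sum_1 _ _ h2]
    rfl
  obtain ⟨wz, hwz0, hwz1, hwzrep⟩ := hzrep
  obtain ⟨a, hadef⟩ : ∃ a : E → ℝ, ∀ y, a y = (1 - ε) * wz y + ε * (s.card : ℝ)⁻¹ :=
    ⟨_, fun _ => rfl⟩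
  have ha_pos : ∀ y ∈ s, 0 < a y := by
    intro y hy
    have h1 := hwz0 y hy
    have h2 : 0 < ε * (s.card : ℝ)⁻¹ := mul_pos hε0 (inv_pos.2 hscard)
    have h3 : 0 ≤ (1 - ε) * wz y := mul_nonneg h1ε.le h1
    rw [hadef]
    linarith
  have hu₀rep : u₀ = ∑ y ∈ s, a y • y := by
    have e1 : u₀ = (1-ε) • z + ε • bbar := by
      rw [hzdef]
      show u₀ = (1-ε) • ((1 - ε)⁻¹ • (u₀ - ε • bbar)) + ε • bbar
      rw [smul_inv_smul₀ h1ε.ne']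
      abel
    rw [e1, ← hwzrep, hbbardef]
    rw [Finset.smul_sum, smul_smul, Finset.smul_sum, ← Finset.sum_add_distrib]
    apply Finset.sum_congr rfl
    intro y hy
    rw [hadef, smul_smul, ← add_smul]
  -- key identity
  have key : ∀ k : ℕ, (l ^ M) ^ k = ∑ y ∈ s, a y * (μ y) ^ k := by
    intro k
    have e1 : ((T ^ M) ^ k) u₀ = ((l ^ M) ^ k) • u₀ := by
      rw [← pow_mul, ← pow_mul]
      exact hTu₀ (M * k)
    have e2 : ((T ^ M) ^ k) u₀ = ∑ y ∈ s, a y • ((μ y) ^ k • y) := by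
      rw [hu₀rep, map_sum]
      apply Finset.sum_congr rfl
      intro y hy
      rw [map_smul, hmuit y ((hmem_s y).1 hy) k]
    have e3 := e1.symm.trans e2
    have e4 := congrArg f e3
    rw [map_smul, map_sum, smul_eq_mul, hfu₀, mul_one] at e4
    rw [e4]
    apply Finset.sum_congr rfl
    intro y hy
    rw [map_smul, map_smul, smul_eq_mul, smul_eq_mul, hfy1 y hy, mul_one]
  have hlM : 0 < l ^ M := pow_pos hlpos M
  have hbound : ∀ y ∈ s, μ y ≤ l ^ M := by
    intro y hy
    by_contra hgt
    push_neg at hgt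
    have hμpos : 0 < μ y := (hmu y ((hmem_s y).1 hy)).2
    have hρ1 : 1 < μ y / l ^ M := (one_lt_div hlM).2 hgt
    obtain ⟨k, hk⟩ := pow_unbounded_of_one_lt (a y)⁻¹ hρ1
    have hterm : a y * μ y ^ k ≤ (l ^ M) ^ k := by
      rw [key k]
      refine Finset.single_le_sum (f := fun y => a y * μ y ^ k) ?_ hy
      intro i hi
      exact mul_nonneg (ha_pos i hi).le (pow_nonneg (hmu i ((hmem_s i).1 hi)).2.le k)
    have h2 : a y * (μ y / l ^ M) ^ k ≤ 1 := by
      rw [div_pow, ← mul_div_assoc, div_le_one (pow_pos hlM k)]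
      exact hterm
    have h3 : 1 < a y * (μ y / l ^ M) ^ k := by
      calc 1 = a y * (a y)⁻¹ := (mul_inv_cancel₀ (ha_pos y hy).ne').symm
      _ < a y * (μ y / l ^ M) ^ k := by
          exact mul_lt_mul_of_pos_left hk (ha_pos y hy)
    linarith
  have hsum0 : ∑ y ∈ s, a y = 1 := by simpa using (key 0).symm
  have hkey1 : ∑ y ∈ s, a y * μ y = l ^ M := by simpa using (key 1).symm
  have hmueq : ∀ y ∈ s, μ y = l ^ M := by
    have hle : ∀ y ∈ s, a y * μ y ≤ a y * l ^ M := fun y hy =>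
      mul_le_mul_of_nonneg_left (hbound y hy) (ha_pos y hy).le
    have hsumeq : ∑ y ∈ s, a y * μ y = ∑ y ∈ s, a y * l ^ M := by
      rw [hkey1, ← Finset.sum_mul, hsum0, one_mul]
    intro y hy
    have := (Finset.sum_eq_sum_iff_of_le hle).1 hsumeq y hy
    exact mul_left_cancel₀ (ha_pos y hy).ne' this
  -- Ext spans
  have hspan : Submodule.span ℝ Ext = ⊤ := by
    have hCs : C ⊆ (Submodule.span ℝ Ext : Set E) := by
      intro x hx
      by_cases hx0 : x = 0
      · rw [hx0]; exact Submodule.zero_mem _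
      · have hfx : 0 < f x := hfpos x hx hx0
        have hxB : (f x)⁻¹ • x ∈ B :=
          ⟨hsmulC _ (inv_nonneg.2 hfx.le) _ hx,
            by rw [map_smul, smul_eq_mul, inv_mul_cancel₀ hfx.ne']⟩
        have hxhull : (f x)⁻¹ • x ∈ convexHull ℝ Ext := by rw [hKM]; exact hxB
        have hsub : convexHull ℝ Ext ⊆ (Submodule.span ℝ Ext : Set E) :=
          convexHull_min Submodule.subset_span (Submodule.span ℝ Ext).convex
        have hxspan : (f x)⁻¹ • x ∈ Submodule.span ℝ Ext := hsub hxhull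
        have e : x = (f x) • ((f x)⁻¹ • x) := by
          rw [smul_smul, mul_inv_cancel₀ hfx.ne', one_smul]
        rw [e]
        exact Submodule.smul_mem _ _ hxspan
    apply Submodule.eq_top_of_nonempty_interior'
    exact ⟨u, interior_mono hCs hu⟩
  refine ⟨M, hM1, ?_⟩
  intro w
  have hw : w ∈ Submodule.span ℝ Ext := by rw [hspan]; exact Submodule.mem_top
  induction hw using Submodule.span_induction with
  | mem x hx =>
    have hxs : x ∈ s := (hmem_s x).2 hx
    rw [(hmu x hx).1, hmueq x hxs]
  | zero => simp
  | add x y hx hy ihx ihy => rw [map_add, ihx, ihy, smul_add]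
  | smul t x hx ih => rw [map_smul, ih, smul_comm]


end Aux

set_option maxHeartbeats 1000000 in
/-- Let `V` be a finite-dimensional real topological vector space and
`C ⊆ V` a finitely generated convex cone that is salient and has nonempty interior.
If `T : V ≃ₗ[ℝ] V` satisfies `T(C) = C` and has an eigenvector `u` in the interior of `C`
with eigenvalue `λ`, then some iterate `T ^ m` (`m ≥ 1`) is multiplication by `λ ^ m`. -/
theorem iterate_is_scalar_of_polyhedral_cone
    {V : Type*} [AddCommGroup V] [Module ℝ V] [TopologicalSpace V]
    [IsTopologicalAddGroup V] [ContinuousSMul ℝ V] [T2Space V] [FiniteDimensional ℝ V]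
    (r : ℕ) (v : Fin r → V) (C : Set V)
    (hC : C = {x | ∃ c : Fin r → ℝ, (∀ i, 0 ≤ c i) ∧ x = ∑ i, c i • v i})
    (hsalient : ∀ x ∈ C, -x ∈ C → x = 0)
    (hint : (interior C).Nonempty)
    (T : V ≃ₗ[ℝ] V) (hT : T '' C = C)
    (u : V) (hu : u ∈ interior C) (l : ℝ) (hl : T u = l • u) :
    ∃ m : ℕ, 1 ≤ m ∧ ∀ w : V, (T ^ m) w = l ^ m • w := by
  classical
  set n := Module.finrank ℝ V with hn
  let e₀ : V ≃ₗ[ℝ] (Fin n → ℝ) := (Module.finBasis ℝ V).equivFun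
  let e : V ≃L[ℝ] (Fin n → ℝ) := e₀.toContinuousLinearEquiv
  have hee : ∀ x : V, e x = e₀ x := fun x => rfl
  set C' : Set (Fin n → ℝ) := e₀ '' C with hC'img
  set v' : Fin r → (Fin n → ℝ) := fun i => e₀ (v i) with hv'def
  set T' : (Fin n → ℝ) ≃ₗ[ℝ] (Fin n → ℝ) := (e₀.symm.trans T).trans e₀ with hT'def
  have hT'app : ∀ x : V, T' (e₀ x) = e₀ (T x) := by
    intro x
    simp [hT'def]
  have hC' : C' = {x | ∃ c : Fin r → ℝ, (∀ i, 0 ≤ c i) ∧ x = ∑ i, c i • v' i} := by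
    ext x
    constructor
    · rintro ⟨y, hy, rfl⟩
      rw [hC] at hy
      obtain ⟨c, hc, rfl⟩ := hy
      refine ⟨c, hc, ?_⟩
      rw [map_sum]
      simp [hv'def]
    · rintro ⟨c, hc, rfl⟩
      refine ⟨∑ i, c i • v i, ?_, ?_⟩
      · rw [hC]; exact ⟨c, hc, rfl⟩
      · rw [map_sum]
        simp [hv'def]
  have hsal' : ∀ x ∈ C', -x ∈ C' → x = 0 := by
    rintro x ⟨y, hy, rfl⟩ hneg
    have : -e₀ y = e₀ (-y) := (map_neg e₀ y).symm
    rw [this] at hneg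
    obtain ⟨y2, hy2, hy2e⟩ := hneg
    have : y2 = -y := e₀.injective hy2e
    rw [this] at hy2
    rw [hsalient y hy hy2, map_zero]
  have hT' : ⇑T' '' C' = C' := by
    have himg : ⇑T' '' C' = e₀ '' (T '' C) := by
      ext x
      constructor
      · rintro ⟨y, ⟨w, hw, rfl⟩, rfl⟩
        exact ⟨T w, Set.mem_image_of_mem _ hw, (hT'app w).symm⟩
      · rintro ⟨y, ⟨w, hw, rfl⟩, rfl⟩
        exact ⟨e₀ w, Set.mem_image_of_mem _ hw, hT'app w⟩
    rw [himg, hT]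
  have himg_int : ⇑e₀ '' interior C = interior C' := by
    have h1 := e.toHomeomorph.image_interior C
    exact h1
  have hu' : e₀ u ∈ interior C' := himg_int ▸ Set.mem_image_of_mem _ hu
  have hint' : (interior C').Nonempty := ⟨e₀ u, hu'⟩
  have hl' : T' (e₀ u) = l • e₀ u := by
    rw [hT'app, hl, map_smul]
  obtain ⟨m, hm, hscal⟩ := aux_cone r v' C' hC' hsal' T' hT' (e₀ u) hu' l hl'
  refine ⟨m, hm, ?_⟩
  have hconj : ∀ (k : ℕ) (x : V), (T' ^ k) (e₀ x) = e₀ ((T ^ k) x) := by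
    intro k
    induction k with
    | zero => intro x; simp
    | succ j ih =>
      intro x
      have h1 : (T' ^ (j+1)) (e₀ x) = T' ((T' ^ j) (e₀ x)) := by rw [pow_succ']; rfl
      have h2 : (T ^ (j+1)) x = T ((T ^ j) x) := by rw [pow_succ']; rfl
      rw [h1, h2, ih x, hT'app]
  intro w
  apply e₀.injective
  rw [← hconj m w, hscal (e₀ w), map_smul]
end

section
/- Let V be a finite-dimensional real topological vector space, and let C ⊆ V be a finitely generated convex cone that is salient and has nonempty topological interior. Then there exists an integer m ≥ 1, depending only on C, such that for EVERY linear automorphism T : V → V with T(C) = C that admits an eigenvector u in the interior of C (i.e. T(u) = λ·u for some λ ∈ ℝ), the iterate T^m is a scalar multiple of the identity: there exists μ ∈ ℝ with T^m(v) = μ·v for all v ∈ V. -/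
set_option linter.unusedSectionVars false
set_option linter.unusedVariables false
set_option maxHeartbeats 1000000

open Finset



section Aux
variable {V : Type*} [AddCommGroup V] [Module ℝ V]

private lemma cone_sum_mem {C : Set V} (h0 : (0:V) ∈ C)
    (hadd : ∀ x ∈ C, ∀ y ∈ C, x + y ∈ C) {ι : Type*} (t : Finset ι) (w : ι → V)
    (hw : ∀ i ∈ t, w i ∈ C) : (∑ i ∈ t, w i) ∈ C := by
  classical
  revert hw
  refine Finset.induction_on t ?_ ?_
  · intro _; simpa using h0
  · intro a s ha ih hw
    rw [Finset.sum_insert ha]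
    exact hadd _ (hw a (mem_insert_self a s)) _ (ih fun i hi => hw i (mem_insert_of_mem hi))

private lemma cone_sum_eq_zero {C : Set V} (h0 : (0:V) ∈ C)
    (hadd : ∀ x ∈ C, ∀ y ∈ C, x + y ∈ C)
    (hsal : ∀ x ∈ C, -x ∈ C → x = 0) {ι : Type*} (t : Finset ι) (w : ι → V)
    (hw : ∀ i ∈ t, w i ∈ C) (hsum : ∑ i ∈ t, w i = 0) : ∀ i ∈ t, w i = 0 := by
  classical
  intro i hi
  refine hsal _ (hw i hi) ?_
  have h1 : w i + ∑ j ∈ t.erase i, w j = 0 := by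
    rw [Finset.add_sum_erase _ _ hi, hsum]
  have h2 : -w i = ∑ j ∈ t.erase i, w j := by
    rw [neg_eq_iff_add_eq_zero]
    exact h1
  rw [h2]
  exact cone_sum_mem h0 hadd _ _ (fun j hj => hw j (Finset.mem_of_mem_erase hj))

private lemma cone_coeff_nonneg {C : Set V}
    (hsmul : ∀ x ∈ C, ∀ a : ℝ, 0 ≤ a → a • x ∈ C)
    (hsal : ∀ x ∈ C, -x ∈ C → x = 0) {x y : V} (hx : x ∈ C) (hx0 : x ≠ 0)
    (hy : y ∈ C) {a : ℝ} (hya : y = a • x) : 0 ≤ a := by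
  by_contra h
  push_neg at h
  have h1 : -y ∈ C := by
    have := hsmul x hx (-a) (by linarith)
    rwa [neg_smul, ← hya] at this
  have h2 := hsal y hy h1
  rw [h2] at hya
  rcases smul_eq_zero.1 hya.symm with h3 | h3
  · exact absurd h3 (by linarith)
  · exact hx0 h3

private lemma eigen_le {C : Set V} (F : V →ₗ[ℝ] ℝ)
    (hFnn : ∀ x ∈ C, 0 ≤ F x) (S : V →ₗ[ℝ] V)
    (hS : ∀ y ∈ C, S y ∈ C) {u x : V} (hxC : x ∈ C) (hFx : 0 < F x)
    {ε : ℝ} (hε : 0 < ε) (hεC : u - ε • x ∈ C)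
    {a c : ℝ} (ha : 0 < a) (hc : 0 < c)
    (hSu : S u = a • u) (hSx : S x = c • x) : c ≤ a := by
  have key : ∀ k : ℕ, a ^ k • u - (ε * c ^ k) • x ∈ C := by
    intro k
    induction k with
    | zero => simpa using hεC
    | succ k ih =>
      have h1 := hS _ ih
      have heq : S (a ^ k • u - (ε * c ^ k) • x) = a ^ (k+1) • u - (ε * c ^ (k+1)) • x := by
        rw [map_sub, map_smul, map_smul, hSu, hSx, smul_smul, smul_smul, pow_succ, pow_succ]
        ring_nf
      rwa [heq] at h1
  by_contra hac
  push_neg at hac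
  obtain ⟨k, hk⟩ := pow_unbounded_of_one_lt (F u / (ε * F x)) ((one_lt_div ha).2 hac)
  have h1 : 0 ≤ a ^ k * F u - ε * c ^ k * F x := by
    have := hFnn _ (key k)
    simpa [map_sub, map_smul, smul_eq_mul, mul_assoc] using this
  rw [div_pow, div_lt_div_iff₀ (by positivity) (by positivity)] at hk
  nlinarith

end Aux



section Gen
variable {V : Type*} [AddCommGroup V] [Module ℝ V]

private def MemCone {r : ℕ} (v : Fin r → V) (s : Finset (Fin r)) (x : V) : Prop :=
  ∃ c : Fin r → ℝ, (∀ i, 0 ≤ c i) ∧ (∀ i, i ∉ s → c i = 0) ∧ x = ∑ i, c i • v i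

private lemma cone_basic {r : ℕ} {v : Fin r → V} {C : Set V}
    (hC : C = {x | ∃ c : Fin r → ℝ, (∀ i, 0 ≤ c i) ∧ x = ∑ i, c i • v i}) :
    (∀ i, v i ∈ C) ∧ ((0:V) ∈ C) ∧ (∀ x ∈ C, ∀ y ∈ C, x + y ∈ C) ∧
      (∀ x ∈ C, ∀ a : ℝ, 0 ≤ a → a • x ∈ C) := by
  classical
  refine ⟨?_, ?_, ?_, ?_⟩
  · intro i
    rw [hC]
    refine ⟨fun k => if k = i then 1 else 0, fun k => by dsimp only; split <;> norm_num, ?_⟩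
    simp [ite_smul]
  · rw [hC]; exact ⟨0, fun i => le_refl 0, by simp⟩
  · simp only [hC, Set.mem_setOf_eq]
    rintro x ⟨cx, hcx, rfl⟩ y ⟨cy, hcy, rfl⟩
    exact ⟨cx + cy, fun i => add_nonneg (hcx i) (hcy i),
      by simp [add_smul, Finset.sum_add_distrib]⟩
  · simp only [hC, Set.mem_setOf_eq]
    rintro x ⟨cx, hcx, rfl⟩ a ha
    exact ⟨fun i => a * cx i, fun i => mul_nonneg ha (hcx i),
      by simp [Finset.smul_sum, mul_smul]⟩

private lemma gen_extreme {r : ℕ} {v : Fin r → V} {C : Set V}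
    (hC : C = {x | ∃ c : Fin r → ℝ, (∀ i, 0 ≤ c i) ∧ x = ∑ i, c i • v i})
    (hsal : ∀ x ∈ C, -x ∈ C → x = 0)
    {s : Finset (Fin r)} (hsP : ∀ x ∈ C, MemCone v s x)
    (hmin : ∀ j ∈ s, ¬ (∀ x ∈ C, MemCone v (s.erase j) x))
    {j : Fin r} (hj : j ∈ s) (hvj : v j ≠ 0) :
    ∀ y ∈ C, ∀ z ∈ C, v j = y + z → ∃ a : ℝ, y = a • v j := by
  classical
  obtain ⟨hvC, h0C, haddC, hsmulC⟩ := cone_basic hC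
  intro y hy z hz hyz
  obtain ⟨a, ha0, has, hya⟩ := hsP y hy
  obtain ⟨b, hb0, hbs, hzb⟩ := hsP z hz
  have hvj_eq : v j = ∑ i, (a i + b i) • v i := by
    rw [hyz, hya, hzb, ← Finset.sum_add_distrib]
    simp [add_smul]
  have hsplit : v j = (a j + b j) • v j + ∑ i ∈ Finset.univ.erase j, (a i + b i) • v i := by
    conv_lhs => rw [hvj_eq]
    exact (Finset.add_sum_erase _ (fun i => (a i + b i) • v i) (Finset.mem_univ j)).symm
  by_cases hc : a j + b j < 1
  · exfalso
    apply hmin j hj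
    have h1c : (0:ℝ) < 1 - (a j + b j) := by linarith
    set g : Fin r → ℝ := fun i => if i = j then 0 else (1 - (a j + b j))⁻¹ * (a i + b i)
      with hg
    have hg0 : ∀ i, 0 ≤ g i := by
      intro i; rw [hg]; dsimp only
      split
      · exact le_refl 0
      · exact mul_nonneg (by positivity) (add_nonneg (ha0 i) (hb0 i))
    have hgs : ∀ i, i ∉ s.erase j → g i = 0 := by
      intro i hi
      rw [Finset.mem_erase] at hi
      push_neg at hi
      rw [hg]; dsimp only
      by_cases hij : i = j
      · simp [hij]
      · rw [if_neg hij, has i (hi hij), hbs i (hi hij)]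
        norm_num
    have hgrep : v j = ∑ i, g i • v i := by
      have e1 : ∑ i, g i • v i
          = (1 - (a j + b j))⁻¹ • ∑ i ∈ Finset.univ.erase j, (a i + b i) • v i := by
        rw [Finset.smul_sum]
        rw [← Finset.sum_erase_add _ _ (Finset.mem_univ j)]
        have : g j • v j = 0 := by rw [hg]; simp
        rw [this, add_zero]
        refine Finset.sum_congr rfl (fun i hi => ?_)
        rw [hg]; dsimp only
        rw [if_neg (Finset.ne_of_mem_erase hi), smul_smul]
      have e2 : (1 - (a j + b j)) • v j = ∑ i ∈ Finset.univ.erase j, (a i + b i) • v i := by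
        rw [sub_smul, one_smul]
        nth_rewrite 1 [hsplit]
        abel
      rw [e1, ← e2, smul_smul, inv_mul_cancel₀ h1c.ne', one_smul]
    intro x hx
    obtain ⟨d, hd0, hds, hdx⟩ := hsP x hx
    refine ⟨fun i => (if i = j then 0 else d i) + d j * g i, ?_, ?_, ?_⟩
    · intro i
      dsimp only
      refine add_nonneg ?_ (mul_nonneg (hd0 j) (hg0 i))
      split
      · exact le_refl 0
      · exact hd0 i
    · intro i hi
      dsimp only
      by_cases hij : i = j
      · subst hij
        rw [if_pos rfl, hg]; simp
      · rw [Finset.mem_erase] at hi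
        push_neg at hi
        rw [if_neg hij, hgs i (by rw [Finset.mem_erase]; push_neg; intro _; exact hi hij),
          hds i (hi hij)]
        norm_num
    · have e3 : ∑ i, ((if i = j then 0 else d i) + d j * g i) • v i
          = ∑ i, (if i = j then 0 else d i) • v i + d j • ∑ i, g i • v i := by
        rw [Finset.smul_sum, ← Finset.sum_add_distrib]
        refine Finset.sum_congr rfl (fun i _ => ?_)
        rw [add_smul, smul_smul]
      have e4 : ∑ i, (if i = j then (0:ℝ) else d i) • v i
          = ∑ i ∈ Finset.univ.erase j, d i • v i := by
        rw [← Finset.sum_erase_add _ _ (Finset.mem_univ j)]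
        rw [if_pos rfl, zero_smul, add_zero]
        refine Finset.sum_congr rfl (fun i hi => ?_)
        rw [if_neg (Finset.ne_of_mem_erase hi)]
      have e5 : x = ∑ i ∈ Finset.univ.erase j, d i • v i + d j • v j := by
        rw [hdx, ← Finset.sum_erase_add _ _ (Finset.mem_univ j)]
      rw [e3, e4, ← hgrep, ← e5]
  · -- a j + b j ≥ 1
    push_neg at hc
    set w : Fin r → V := fun i => if i = j then ((a j + b j) - 1) • v j else (a i + b i) • v i
      with hw
    have hwC : ∀ i, w i ∈ C := by
      intro i
      rw [hw]; dsimp only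
      split
      · exact hsmulC _ (hvC j) _ (by linarith)
      · exact hsmulC _ (hvC i) _ (add_nonneg (ha0 i) (hb0 i))
    have hwsum : ∑ i, w i = 0 := by
      rw [← Finset.sum_erase_add _ _ (Finset.mem_univ j)]
      have e1 : ∑ i ∈ Finset.univ.erase j, w i
          = ∑ i ∈ Finset.univ.erase j, (a i + b i) • v i := by
        refine Finset.sum_congr rfl (fun i hi => ?_)
        rw [hw]; dsimp only
        rw [if_neg (Finset.ne_of_mem_erase hi)]
      have e2 : w j = ((a j + b j) - 1) • v j := by rw [hw]; dsimp only; rw [if_pos rfl]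
      rw [e1, e2]
      have e3 : ∑ i ∈ Finset.univ.erase j, (a i + b i) • v i
          = v j - (a j + b j) • v j := by
        rw [eq_sub_iff_add_eq, add_comm]
        exact hsplit.symm
      rw [e3, sub_smul, one_smul]
      abel
    have hall := cone_sum_eq_zero h0C haddC hsal Finset.univ w (fun i _ => hwC i) hwsum
    refine ⟨a j, ?_⟩
    have hzero : ∀ i, i ≠ j → a i • v i = 0 := by
      intro i hij
      have h1 := hall i (Finset.mem_univ i)
      rw [hw] at h1; dsimp only at h1
      rw [if_neg hij] at h1
      rcases smul_eq_zero.1 h1 with h2 | h2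
      · have : a i = 0 := by linarith [ha0 i, hb0 i]
        rw [this, zero_smul]
      · rw [h2, smul_zero]
    rw [hya, ← Finset.sum_erase_add _ _ (Finset.mem_univ j)]
    rw [Finset.sum_eq_zero (fun i hi => hzero i (Finset.ne_of_mem_erase hi)), zero_add]
end Gen




private lemma exists_pos_functional {V : Type*} [AddCommGroup V] [Module ℝ V] [TopologicalSpace V]
    [IsTopologicalAddGroup V] [ContinuousSMul ℝ V] [T2Space V] [FiniteDimensional ℝ V]
    {r : ℕ} {v : Fin r → V} {C : Set V}
    (hC : C = {x | ∃ c : Fin r → ℝ, (∀ i, 0 ≤ c i) ∧ x = ∑ i, c i • v i})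
    (hsal : ∀ x ∈ C, -x ∈ C → x = 0) :
    ∃ F : V →ₗ[ℝ] ℝ, ∀ x ∈ C, x ≠ 0 → 0 < F x := by
  classical
  obtain ⟨hvC, h0C, haddC, hsmulC⟩ := cone_basic hC
  set t : Finset V := (Finset.univ.filter (fun i : Fin r => v i ≠ 0)).image v with ht
  have h0K : (0:V) ∉ convexHull ℝ (↑t : Set V) := by
    intro h
    obtain ⟨w, hw0, hw1, hwc⟩ := Finset.mem_convexHull.1 h
    have hsum : ∑ y ∈ t, w y • y = 0 := by
      have h2 := hwc
      rw [Finset.centerMass, hw1, inv_one, one_smul] at h2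
      simpa using h2
    have hyC : ∀ y ∈ t, y ∈ C := by
      intro y hy
      obtain ⟨i, -, rfl⟩ := Finset.mem_image.1 hy
      exact hvC i
    have hy0 : ∀ y ∈ t, y ≠ (0:V) := by
      intro y hy
      obtain ⟨i, hi, rfl⟩ := Finset.mem_image.1 hy
      exact (Finset.mem_filter.1 hi).2
    have hall := cone_sum_eq_zero h0C haddC hsal t _
      (fun y hy => hsmulC _ (hyC y hy) _ (hw0 y hy)) hsum
    have hzz : ∑ y ∈ t, w y = 0 := by
      refine Finset.sum_eq_zero (fun y hy => ?_)
      rcases smul_eq_zero.1 (hall y hy) with h3 | h3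
      · exact h3
      · exact absurd h3 (hy0 y hy)
    rw [hzz] at hw1; norm_num at hw1
  set e : V ≃L[ℝ] EuclideanSpace ℝ (Fin (Module.finrank ℝ V)) := toEuclidean with he
  set K' : Set (EuclideanSpace ℝ (Fin (Module.finrank ℝ V))) := convexHull ℝ (⇑e '' ↑t) with hK'
  have hK'cpt : IsCompact K' := (t.finite_toSet.image _).isCompact_convexHull (𝕜 := ℝ)
  have h0K' : (0 : EuclideanSpace ℝ (Fin (Module.finrank ℝ V))) ∉ K' := by
    intro h
    apply h0K
    have h2 : e.symm.toLinearEquiv.toLinearMap (0 : EuclideanSpace ℝ (Fin (Module.finrank ℝ V)))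
        ∈ ⇑(e.symm.toLinearEquiv.toLinearMap) '' K' := ⟨0, h, rfl⟩
    rw [hK', LinearMap.image_convexHull, Set.image_image] at h2
    simp only [LinearEquiv.coe_coe, ContinuousLinearEquiv.coe_toLinearEquiv,
      ContinuousLinearEquiv.symm_apply_apply, Set.image_id', map_zero] at h2
    exact h2
  obtain ⟨f, c0, hfx, hf⟩ := geometric_hahn_banach_point_closed
    (convex_convexHull ℝ _) hK'cpt.isClosed h0K'
  rw [map_zero] at hfx
  set F : V →ₗ[ℝ] ℝ := f.toLinearMap.comp (e.toContinuousLinearMap.toLinearMap) with hFdef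
  have hFv : ∀ i : Fin r, v i ≠ 0 → 0 < F (v i) := by
    intro i hvi
    have hmem : v i ∈ t := Finset.mem_image.2 ⟨i, Finset.mem_filter.2 ⟨Finset.mem_univ i, hvi⟩, rfl⟩
    have h1 : e (v i) ∈ K' := subset_convexHull ℝ _ ⟨v i, hmem, rfl⟩
    have h2 := hf _ h1
    have h3 : F (v i) = f (e (v i)) := rfl
    rw [h3]; linarith
  refine ⟨F, ?_⟩
  intro x hxC hx0
  rw [hC, Set.mem_setOf_eq] at hxC
  obtain ⟨c, hc0, rfl⟩ := hxC
  have hFx : F (∑ i, c i • v i) = ∑ i, c i * F (v i) := by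
    rw [map_sum]; refine Finset.sum_congr rfl (fun i _ => ?_); rw [map_smul, smul_eq_mul]
  rw [hFx]
  obtain ⟨i0, hi0⟩ : ∃ i, c i • v i ≠ 0 := by
    by_contra hno
    push_neg at hno
    exact hx0 (by rw [Finset.sum_eq_zero (fun i _ => hno i)])
  have hvi0 : v i0 ≠ 0 := by
    intro h; exact hi0 (by rw [h, smul_zero])
  have hci0 : 0 < c i0 := by
    rcases (hc0 i0).lt_or_eq with h | h
    · exact h
    · exact absurd (by rw [← h, zero_smul]) hi0
  refine Finset.sum_pos' (fun i _ => ?_) ⟨i0, Finset.mem_univ _, mul_pos hci0 (hFv _ hvi0)⟩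
  rcases eq_or_ne (v i) 0 with h | h
  · simp [h]
  · exact mul_nonneg (hc0 i) (hFv i h).le


private def ConeExt {V : Type*} [AddCommGroup V] [Module ℝ V] (C : Set V) (x : V) : Prop :=
  x ∈ C ∧ x ≠ 0 ∧ ∀ y ∈ C, ∀ z ∈ C, x = y + z → ∃ a : ℝ, y = a • x

section ExtLemmas
variable {V : Type*} [AddCommGroup V] [Module ℝ V]

private lemma cone_ext_smul {C : Set V}
    (hsmul : ∀ x ∈ C, ∀ a : ℝ, 0 ≤ a → a • x ∈ C)
    {x : V} (hx : ConeExt C x) {t : ℝ} (ht : 0 < t) : ConeExt C (t • x) := by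
  obtain ⟨hxC, hx0, hxe⟩ := hx
  refine ⟨hsmul _ hxC _ ht.le, smul_ne_zero ht.ne' hx0, ?_⟩
  intro y hy z hz hyz
  have h1 : x = t⁻¹ • y + t⁻¹ • z := by
    have h2 : x = t⁻¹ • (t • x) := by rw [smul_smul, inv_mul_cancel₀ ht.ne', one_smul]
    rw [h2, hyz, smul_add]
  obtain ⟨a, hya⟩ := hxe _ (hsmul _ hy _ (by positivity)) _ (hsmul _ hz _ (by positivity)) h1
  refine ⟨a, ?_⟩
  have h3 : t • (t⁻¹ • y) = y := by rw [smul_smul, mul_inv_cancel₀ ht.ne', one_smul]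
  rw [← h3, hya, smul_comm]

private lemma cone_ext_map {C : Set V} (T : V ≃ₗ[ℝ] V) (hTC : T '' C = C)
    {x : V} (hx : ConeExt C x) : ConeExt C (T x) := by
  obtain ⟨hxC, hx0, hxe⟩ := hx
  have hTC1 : ∀ y ∈ C, T y ∈ C := by
    intro y hy; rw [← hTC]; exact Set.mem_image_of_mem _ hy
  have hTCs : ∀ y ∈ C, T.symm y ∈ C := by
    intro y hy
    rw [← hTC] at hy
    obtain ⟨w, hwC, hwy⟩ := hy
    rwa [← hwy, LinearEquiv.symm_apply_apply]
  refine ⟨hTC1 _ hxC, ?_, ?_⟩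
  · intro h
    apply hx0
    have := congrArg T.symm h
    simpa using this
  · intro y hy z hz hyz
    have h1 : x = T.symm y + T.symm z := by
      have := congrArg T.symm hyz
      simpa [map_add] using this
    obtain ⟨a, hya⟩ := hxe _ (hTCs _ hy) _ (hTCs _ hz) h1
    refine ⟨a, ?_⟩
    have := congrArg T hya
    simpa [map_smul] using this

private lemma cone_ext_ray {r : ℕ} {v : Fin r → V} {C : Set V}
    (hC : C = {x | ∃ c : Fin r → ℝ, (∀ i, 0 ≤ c i) ∧ x = ∑ i, c i • v i})
    (hsal : ∀ x ∈ C, -x ∈ C → x = 0)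
    {x : V} (hx : ConeExt C x) :
    ∃ i : Fin r, v i ≠ 0 ∧ ∃ t : ℝ, 0 < t ∧ x = t • v i := by
  classical
  obtain ⟨hvC, h0C, haddC, hsmulC⟩ := cone_basic hC
  obtain ⟨hxC, hx0, hxe⟩ := hx
  have hxC' := hxC
  rw [hC, Set.mem_setOf_eq] at hxC'
  obtain ⟨c, hc0, hxc⟩ := hxC'
  have hsplit : ∀ i : Fin r, ∃ a : ℝ, 0 ≤ a ∧ c i • v i = a • x := by
    intro i
    have h1 : c i • v i ∈ C := hsmulC _ (hvC i) _ (hc0 i)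
    have h2 : (∑ k ∈ Finset.univ.erase i, c k • v k) ∈ C :=
      cone_sum_mem h0C haddC _ _ (fun k _ => hsmulC _ (hvC k) _ (hc0 k))
    have h3 : x = c i • v i + ∑ k ∈ Finset.univ.erase i, c k • v k := by
      rw [hxc]
      exact (Finset.add_sum_erase _ (fun k => c k • v k) (Finset.mem_univ i)).symm
    obtain ⟨a, hya⟩ := hxe _ h1 _ h2 h3
    exact ⟨a, cone_coeff_nonneg hsmulC hsal hxC hx0 h1 hya, hya⟩
  choose aa haa0 haax using hsplit
  have hsum1 : ∑ i, aa i = 1 := by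
    have h4 : x = (∑ i, aa i) • x := by
      rw [Finset.sum_smul]
      nth_rewrite 1 [hxc]
      exact Finset.sum_congr rfl (fun i _ => haax i)
    have h5 : ((∑ i, aa i) - 1) • x = 0 := by
      rw [sub_smul, one_smul, ← h4, sub_self]
    rcases smul_eq_zero.1 h5 with h | h
    · have := sub_eq_zero.1 h; linarith [this]
    · exact absurd h hx0
  obtain ⟨i, hi⟩ : ∃ i, 0 < aa i := by
    by_contra hno
    push_neg at hno
    have : (∑ i, aa i) ≤ 0 := Finset.sum_nonpos (fun i _ => hno i)
    linarith
  have hca : c i • v i = aa i • x := haax i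
  have hvine : c i • v i ≠ 0 := by rw [hca]; exact smul_ne_zero hi.ne' hx0
  have hvi0 : v i ≠ 0 := by intro h; exact hvine (by rw [h, smul_zero])
  have hci : 0 < c i := by
    rcases (hc0 i).lt_or_eq with h | h
    · exact h
    · exact absurd (by rw [← h, zero_smul]) hvine
  refine ⟨i, hvi0, c i / aa i, by positivity, ?_⟩
  have h5 : x = (aa i)⁻¹ • (c i • v i) := by
    rw [hca, smul_smul, inv_mul_cancel₀ hi.ne', one_smul]
  rw [div_eq_inv_mul, mul_smul]
  exact h5

end ExtLemmas

section TopLemmas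
variable {V : Type*} [AddCommGroup V] [Module ℝ V] [TopologicalSpace V]
  [IsTopologicalAddGroup V] [ContinuousSMul ℝ V]

private lemma interior_ne_zero [Nontrivial V] {C : Set V}
    (hsal : ∀ x ∈ C, -x ∈ C → x = 0) {u : V} (hu : u ∈ interior C) : u ≠ 0 := by
  obtain ⟨w0, hw0⟩ := exists_ne (0 : V)
  intro h
  rw [h] at hu
  have hcont : Continuous (fun t : ℝ => t • w0) := by continuity
  have hopen : IsOpen ((fun t : ℝ => t • w0) ⁻¹' interior C) := isOpen_interior.preimage hcont
  have h0m : (0:ℝ) ∈ (fun t : ℝ => t • w0) ⁻¹' interior C := by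
    simp only [Set.mem_preimage, zero_smul]; exact hu
  obtain ⟨ε, hε, hball⟩ := Metric.isOpen_iff.1 hopen 0 h0m
  have hmem : ∀ δ : ℝ, |δ| < ε → δ • w0 ∈ C := by
    intro δ hδ
    have hb : δ ∈ Metric.ball (0:ℝ) ε := by rw [Metric.mem_ball, Real.dist_eq, sub_zero]; exact hδ
    exact interior_subset (hball hb)
  have h1 := hmem (ε/2) (by rw [abs_of_pos (by linarith)]; linarith)
  have h2 := hmem (-(ε/2)) (by rw [abs_neg, abs_of_pos (by linarith)]; linarith)
  have h3 := hsal _ h1 (by rw [← neg_smul]; exact h2)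
  rcases smul_eq_zero.1 h3 with h4 | h4
  · linarith
  · exact hw0 h4

private lemma exists_eps_sub_mem {C : Set V} {u : V} (x : V) (hu : u ∈ interior C) :
    ∃ ε : ℝ, 0 < ε ∧ u - ε • x ∈ C := by
  have hcont : Continuous (fun t : ℝ => u - t • x) := by continuity
  have hopen : IsOpen ((fun t : ℝ => u - t • x) ⁻¹' interior C) := isOpen_interior.preimage hcont
  have h0m : (0:ℝ) ∈ (fun t : ℝ => u - t • x) ⁻¹' interior C := by
    simp only [Set.mem_preimage, zero_smul, sub_zero]; exact hu
  obtain ⟨ε, hε, hball⟩ := Metric.isOpen_iff.1 hopen 0 h0m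
  refine ⟨ε/2, by linarith, ?_⟩
  have hb : (ε/2) ∈ Metric.ball (0:ℝ) ε := by
    rw [Metric.mem_ball, Real.dist_eq, sub_zero, abs_of_pos] <;> linarith
  exact interior_subset (hball hb)

end TopLemmas

/-- Let `C ⊆ V` be a finitely generated, salient convex cone with nonempty
interior in a finite-dimensional real topological vector space `V`. Then there is an `m ≥ 1`,
depending only on `C`, such that every linear automorphism `T` of `V` with `T(C) = C` that has
an eigenvector in the interior of `C` satisfies that `T ^ m` is a scalar multiple of the
identity. -/
theorem uniform_iterate_is_scalar_of_polyhedral_cone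
    {V : Type*} [AddCommGroup V] [Module ℝ V] [TopologicalSpace V]
    [IsTopologicalAddGroup V] [ContinuousSMul ℝ V] [T2Space V] [FiniteDimensional ℝ V]
    (r : ℕ) (v : Fin r → V) (C : Set V)
    (hC : C = {x | ∃ c : Fin r → ℝ, (∀ i, 0 ≤ c i) ∧ x = ∑ i, c i • v i})
    (hsalient : ∀ x ∈ C, -x ∈ C → x = 0)
    (hint : (interior C).Nonempty) :
    ∃ m : ℕ, 1 ≤ m ∧
      ∀ (T : V ≃ₗ[ℝ] V), T '' C = C →
        ∀ u ∈ interior C, ∀ l : ℝ, T u = l • u →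
          ∃ μ : ℝ, ∀ w : V, (T ^ m) w = μ • w := by
  classical
  rcases subsingleton_or_nontrivial V with hV | hV
  · refine ⟨1, le_refl 1, fun T _ u _ l _ => ⟨1, fun w => ?_⟩⟩
    rw [Subsingleton.elim w 0]
    simp
  obtain ⟨hvC, h0C, haddC, hsmulC⟩ := cone_basic hC
  obtain ⟨F, hFpos⟩ := exists_pos_functional hC hsalient
  have hFnn : ∀ x ∈ C, 0 ≤ F x := by
    intro x hx
    rcases eq_or_ne x 0 with h | h
    · rw [h, map_zero]
    · exact (hFpos x hx h).le
  -- minimal generating subset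
  obtain ⟨s, hsP, hsmin⟩ : ∃ s : Finset (Fin r), (∀ x ∈ C, MemCone v s x) ∧
      ∀ s' : Finset (Fin r), (∀ x ∈ C, MemCone v s' x) → s.card ≤ s'.card := by
    have hU : ∀ x ∈ C, MemCone v Finset.univ x := by
      intro x hx
      rw [hC, Set.mem_setOf_eq] at hx
      obtain ⟨c, h1, h2⟩ := hx
      exact ⟨c, h1, fun i hi => absurd (Finset.mem_univ i) hi, h2⟩
    obtain ⟨s, hs1, hs2⟩ := Finset.exists_min_image
      (Finset.univ.powerset.filter (fun s => ∀ x ∈ C, MemCone v s x)) Finset.card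
      ⟨Finset.univ, Finset.mem_filter.2 ⟨Finset.mem_powerset.2 (Finset.subset_univ _), hU⟩⟩
    exact ⟨s, (Finset.mem_filter.1 hs1).2, fun s' hs' =>
      hs2 s' (Finset.mem_filter.2 ⟨Finset.mem_powerset.2 (Finset.subset_univ _), hs'⟩)⟩
  have hminerase : ∀ j ∈ s, ¬ (∀ x ∈ C, MemCone v (s.erase j) x) := by
    intro j hj hcon
    have h1 := hsmin _ hcon
    have h2 := Finset.card_erase_lt_of_mem hj
    omega
  -- the normalized extreme vectors
  set Ehat : Set V := {x | ConeExt C x ∧ F x = 1} with hEhat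
  have hEhatfin : Ehat.Finite := by
    apply Set.Finite.subset (Set.finite_range (fun i : Fin r => (F (v i))⁻¹ • v i))
    rintro x ⟨hxE, hxF⟩
    obtain ⟨i, hvi, t', ht', rfl⟩ := cone_ext_ray hC hsalient hxE
    have hFvi : 0 < F (v i) := hFpos _ (hvC i) hvi
    have h1 : t' * F (v i) = 1 := by
      rw [map_smul, smul_eq_mul] at hxF; exact hxF
    have ht'' : t' = (F (v i))⁻¹ := eq_inv_of_mul_eq_one_left h1
    exact ⟨i, by rw [ht'']⟩
  haveI hfty : Fintype ↥Ehat := hEhatfin.fintype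
  haveI : Nonempty (Equiv.Perm ↥Ehat) := ⟨1⟩
  -- span of normalized extreme vectors is everything
  have hspan : Submodule.span ℝ Ehat = ⊤ := by
    have h1 : Submodule.span ℝ C = ⊤ := by
      apply Submodule.eq_top_of_nonempty_interior'
      obtain ⟨u0, hu0⟩ := hint
      exact ⟨u0, interior_mono Submodule.subset_span hu0⟩
    rw [eq_top_iff, ← h1, Submodule.span_le]
    intro x hx
    obtain ⟨c, hc0, hcs, rfl⟩ := hsP x hx
    refine Submodule.sum_mem _ (fun i _ => ?_)
    rcases eq_or_ne (v i) 0 with h | h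
    · rw [h, smul_zero]; exact Submodule.zero_mem _
    rcases eq_or_ne (c i) 0 with h' | h'
    · rw [h', zero_smul]; exact Submodule.zero_mem _
    have his : i ∈ s := by
      by_contra hns; exact h' (hcs i hns)
    have hvE : ConeExt C (v i) :=
      ⟨hvC i, h, gen_extreme hC hsalient hsP hminerase his h⟩
    have hFvi : 0 < F (v i) := hFpos _ (hvC i) h
    have hmemE : (F (v i))⁻¹ • v i ∈ Ehat := by
      refine ⟨cone_ext_smul hsmulC hvE (by positivity), ?_⟩
      rw [map_smul, smul_eq_mul, inv_mul_cancel₀ hFvi.ne']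
    have hvimem : v i ∈ Submodule.span ℝ Ehat := by
      have h2 := Submodule.smul_mem (Submodule.span ℝ Ehat) (F (v i))
        (Submodule.subset_span hmemE)
      rwa [smul_smul, mul_inv_cancel₀ hFvi.ne', one_smul] at h2
    exact Submodule.smul_mem _ _ hvimem
  refine ⟨Fintype.card (Equiv.Perm ↥Ehat), Fintype.card_pos, ?_⟩
  intro T hTC u hu l hul
  set m := Fintype.card (Equiv.Perm ↥Ehat) with hm
  have hTC1 : ∀ y ∈ C, T y ∈ C := by
    intro y hy; rw [← hTC]; exact Set.mem_image_of_mem _ hy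
  have huC : u ∈ C := interior_subset hu
  have hu0 : u ≠ 0 := interior_ne_zero hsalient hu
  have hFu : 0 < F u := hFpos u huC hu0
  have hTu0 : T u ≠ 0 := by
    intro h; apply hu0
    have := congrArg T.symm h; simpa using this
  have hl : 0 < l := by
    have h1 : 0 < F (T u) := hFpos _ (hTC1 u huC) hTu0
    rw [hul, map_smul, smul_eq_mul] at h1
    nlinarith
  -- the permutation induced by T on Ehat
  have hφmem : ∀ x : V, x ∈ Ehat → (F (T x))⁻¹ • T x ∈ Ehat := by
    rintro x ⟨hxE, hxF⟩
    have hTxE : ConeExt C (T x) := cone_ext_map T hTC hxE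
    have hFTx : 0 < F (T x) := hFpos _ hTxE.1 hTxE.2.1
    refine ⟨cone_ext_smul hsmulC hTxE (by positivity), ?_⟩
    rw [map_smul, smul_eq_mul, inv_mul_cancel₀ hFTx.ne']
  have hFTpos : ∀ x : V, x ∈ Ehat → 0 < F (T x) := by
    rintro x ⟨hxE, hxF⟩
    have hTxE : ConeExt C (T x) := cone_ext_map T hTC hxE
    exact hFpos _ hTxE.1 hTxE.2.1
  set φ : ↥Ehat → ↥Ehat := fun x => ⟨(F (T (x:V)))⁻¹ • T (x:V), hφmem _ x.2⟩ with hφ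
  have hφinj : Function.Injective φ := by
    rintro ⟨x, hx⟩ ⟨y, hy⟩ hxy
    have hxy' : (F (T x))⁻¹ • T x = (F (T y))⁻¹ • T y := congrArg Subtype.val hxy
    have h1 : T ((F (T x))⁻¹ • x) = T ((F (T y))⁻¹ • y) := by
      rw [map_smul, map_smul]; exact hxy'
    have h2 := T.injective h1
    have h3 := congrArg F h2
    rw [map_smul, map_smul, smul_eq_mul, smul_eq_mul, hx.2, hy.2, mul_one, mul_one] at h3
    rw [h3] at h2
    have hne : (F (T y))⁻¹ ≠ 0 := by
      have h4 := hFTpos y hy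
      positivity
    exact Subtype.ext (smul_right_injective V hne h2)
  haveI : Finite ↥Ehat := Finite.of_fintype _
  have hφbij : Function.Bijective φ := Finite.injective_iff_bijective.1 hφinj
  set σ : Equiv.Perm ↥Ehat := Equiv.ofBijective φ hφbij with hσ
  have hσapp : ∀ x : ↥Ehat, ((σ x : ↥Ehat) : V) = (F (T (x:V)))⁻¹ • T (x:V) := by
    intro x; rfl
  -- iteration: T^k on an extreme vector is a positive multiple of σ^k of it
  have hiter : ∀ (k : ℕ) (x : ↥Ehat), ∃ c : ℝ, 0 < c ∧
      (T ^ k) (x : V) = c • (((σ ^ k) x : ↥Ehat) : V) := by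
    intro k
    induction k with
    | zero => intro x; exact ⟨1, one_pos, by simp⟩
    | succ k ih =>
      intro x
      obtain ⟨c, hc, hck⟩ := ih x
      have hy := ((σ ^ k) x).2
      have hFTy : 0 < F (T (((σ ^ k) x : ↥Ehat) : V)) := hFTpos _ hy
      refine ⟨c * F (T (((σ ^ k) x : ↥Ehat) : V)), by positivity, ?_⟩
      have hps : (T ^ (k+1)) (x:V) = T ((T ^ k) (x:V)) := by
        rw [LinearEquiv.coe_pow, LinearEquiv.coe_pow, Function.iterate_succ_apply']
      have hσs : (((σ ^ (k+1)) x : ↥Ehat) : V) = ((σ ((σ ^ k) x) : ↥Ehat) : V) := by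
        rw [pow_succ']
        rfl
      rw [hps, hck, map_smul, hσs, hσapp ((σ ^ k) x), smul_smul]
      congr 1
      rw [mul_assoc, mul_inv_cancel₀ hFTy.ne', mul_one]
  have hσm : σ ^ m = 1 := pow_card_eq_one
  -- eigenvalue of T^m on u
  have hTmu : ∀ k : ℕ, (T ^ k) u = (l ^ k) • u := by
    intro k
    induction k with
    | zero => simp
    | succ k ih =>
      have hps : (T ^ (k+1)) u = T ((T ^ k) u) := by
        rw [LinearEquiv.coe_pow, LinearEquiv.coe_pow, Function.iterate_succ_apply']
      rw [hps, ih, map_smul, hul, smul_smul, ← pow_succ]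
  have hTk1 : ∀ k : ℕ, ∀ y ∈ C, (T ^ k) y ∈ C := by
    intro k
    induction k with
    | zero => intro y hy; simpa using hy
    | succ k ih =>
      intro y hy
      rw [LinearEquiv.coe_pow, Function.iterate_succ_apply', ← LinearEquiv.coe_pow]
      exact hTC1 _ (ih y hy)
  have hTkimg : ∀ k : ℕ, ∀ y ∈ C, ((T ^ k).symm) y ∈ C := by
    have himg : ∀ k : ℕ, ⇑(T ^ k) '' C = C := by
      intro k
      induction k with
      | zero => simp
      | succ k ih =>
        have hcomp : ⇑(T ^ (k+1)) = ⇑T ∘ ⇑(T ^ k) := by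
          funext y
          rw [Function.comp_apply, LinearEquiv.coe_pow, LinearEquiv.coe_pow,
            Function.iterate_succ_apply']
        rw [hcomp, Set.image_comp, ih, hTC]
    intro k y hy
    rw [← himg k] at hy
    obtain ⟨w, hwC, hwy⟩ := hy
    rwa [← hwy, LinearEquiv.symm_apply_apply]
  -- every normalized extreme vector is an eigenvector of T^m with eigenvalue l^m
  have hfix : ∀ x : ↥Ehat, (T ^ m) (x:V) = (l ^ m) • (x:V) := by
    intro x
    obtain ⟨c, hc, hck⟩ := hiter m x
    rw [hσm] at hck
    simp only [Equiv.Perm.coe_one, id_eq] at hck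
    have hxE := x.2.1
    have hxC : (x:V) ∈ C := hxE.1
    have hx0 : (x:V) ≠ 0 := hxE.2.1
    have hFx : 0 < F (x:V) := hFpos _ hxC hx0
    obtain ⟨ε, hε, hεC⟩ := exists_eps_sub_mem (C := C) (x:V) hu
    have hlm : 0 < l ^ m := by positivity
    have hforward : c ≤ l ^ m := by
      refine eigen_le F hFnn ((T ^ m : V ≃ₗ[ℝ] V) : V →ₗ[ℝ] V)
        (fun y hy => hTk1 m y hy) hxC hFx hε hεC hlm hc ?_ ?_
      · simpa using hTmu m
      · simpa using hck
    have hbackward : l ^ m ≤ c := by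
      have h1 : (T ^ m).symm u = (l ^ m)⁻¹ • u := by
        have h2 := congrArg (T ^ m).symm (hTmu m)
        rw [LinearEquiv.symm_apply_apply, map_smul] at h2
        exact ((inv_smul_eq_iff₀ hlm.ne').2 h2).symm
      have h2 : (T ^ m).symm (x:V) = c⁻¹ • (x:V) := by
        have h3 := congrArg (T ^ m).symm hck
        rw [LinearEquiv.symm_apply_apply, map_smul] at h3
        exact ((inv_smul_eq_iff₀ hc.ne').2 h3).symm
      have h4 : c⁻¹ ≤ (l ^ m)⁻¹ := by
        refine eigen_le F hFnn (((T ^ m).symm : V ≃ₗ[ℝ] V) : V →ₗ[ℝ] V)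
          (fun y hy => hTkimg m y hy) hxC hFx hε hεC (by positivity) (by positivity) ?_ ?_
        · simpa using h1
        · simpa using h2
      have h5 := mul_le_mul_of_nonneg_left h4 (mul_pos hc hlm).le
      calc l ^ m = c * l ^ m * c⁻¹ := by field_simp
      _ ≤ c * l ^ m * (l ^ m)⁻¹ := h5
      _ = c := by field_simp
    have hceq : c = l ^ m := le_antisymm hforward hbackward
    rw [hck, hceq]
  refine ⟨l ^ m, ?_⟩
  have hext : ((T ^ m : V ≃ₗ[ℝ] V) : V →ₗ[ℝ] V) = (l ^ m) • (LinearMap.id : V →ₗ[ℝ] V) := by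
    apply LinearMap.ext_on hspan
    intro x hx
    simpa using hfix ⟨x, hx⟩
  intro w
  have h6 := congrArg (fun g : V →ₗ[ℝ] V => g w) hext
  simpa using h6
end
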